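/- Bridge Target Score Identity (first form): let 0 < α < 1 and Y = αX₀ + (1 − α)X₁ + W with X₀, X₁, W independent with densities p₀, p₁, p_W. Then for every y ∈ ℝ^d, ∇ log p_Y(y) = α^{-1} ∬ ∇ log p₀(x₀) · p_{X₀,X₁|Y}(x₀, x₁ | y) dx₀ dx₁. -/

import Mathlib

/-!
Substituting `x₀ ↦ x₀ + α⁻¹ h` moves the increment of `p_Y` from `p_W` onto `p₀`:
`p_Y (y + h) - p_Y y = ∬ (p₀ (x₀ + α⁻¹ h) - p₀ x₀) p₁ x₁ p_W (y - α x₀ - (1 - α) x₁)`.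
Writing the bracket as `∫₀¹ ⟪∇p₀ (x₀ + t α⁻¹ h), α⁻¹ h⟫ dt`, swapping the integrals and undoing
the substitution gives `p_Y (y + h) - p_Y y = ∫₀¹ ⟪α⁻¹ A (y + t h), h⟫ dt` with
`A y = ∬ ∇p₀ x₀ p₁ x₁ p_W (y - α x₀ - (1 - α) x₁)`, which is continuous by dominated convergence;
hence `∇p_Y = α⁻¹ A`, and dividing by `p_Y` gives the identity since `∇ log p₀ = ∇p₀ / p₀`.
The same decomposition shows that integrability of the integrand of `p_Y` is locally constant in
`y`, so it holds everywhere once it holds almost everywhere, which Tonelli provides.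
-/

open MeasureTheory Real Set Filter Topology
open scoped RealInnerProductSpace

theorem MeasureTheory.integrable_prod_of_integral_norm_le {X Y G : Type*} [MeasurableSpace X]
    [MeasurableSpace Y] [NormedAddCommGroup G] {μ : Measure X} {ν : Measure Y} [SFinite μ]
    [IsFiniteMeasure ν] {F : X × Y → G} (hF : AEStronglyMeasurable F (μ.prod ν))
    (h_int : ∀ᵐ y ∂ν, Integrable (fun x => F (x, y)) μ) {C : ℝ}
    (h_le : ∀ᵐ y ∂ν, ∫ x, ‖F (x, y)‖ ∂μ ≤ C) : Integrable F (μ.prod ν) := by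
  refine (integrable_prod_iff' hF).2 ⟨h_int, (integrable_const C).mono' ?_ ?_⟩
  · exact hF.norm.prod_swap.integral_prod_right'
  · filter_upwards [h_le] with y hy
    rwa [norm_of_nonneg (integral_nonneg fun _ => norm_nonneg _)]

theorem dist_add_smul_left_lt {E : Type*} [SeminormedAddCommGroup E] [NormedSpace ℝ E]
    {y v : E} {t r : ℝ} (ht₀ : 0 ≤ t) (ht₁ : t ≤ 1) (hv : ‖v‖ < r) : dist (y + t • v) y < r := by
  rw [dist_eq_norm, add_sub_cancel_left, norm_smul, norm_of_nonneg ht₀]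
  exact (mul_le_of_le_one_left (norm_nonneg v) ht₁).trans_lt hv

section Calculus

variable {E : Type*} [NormedAddCommGroup E] [InnerProductSpace ℝ E] [CompleteSpace E]

theorem ContDiff.continuous_gradient {f : E → ℝ} (hf : ContDiff ℝ 1 f) :
    Continuous (gradient f) :=
  (InnerProductSpace.toDual ℝ E).symm.continuous.comp (hf.continuous_fderiv one_ne_zero)

theorem HasGradientAt.log {f : E → ℝ} {f' x : E} (hf : HasGradientAt f f' x) (hx : f x ≠ 0) :
    HasGradientAt (fun y => Real.log (f y)) ((f x)⁻¹ • f') x := by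
  rw [hasGradientAt_iff_hasFDerivAt, map_smul]
  exact hf.hasFDerivAt.log hx

theorem ContDiff.sub_eq_integral_inner_gradient {f : E → ℝ} (hf : ContDiff ℝ 1 f) (x w : E) :
    f (x + w) - f x = ∫ t in (0 : ℝ)..1, ⟪gradient f (x + t • w), w⟫ := by
  have hderiv : ∀ t ∈ uIcc (0 : ℝ) 1,
      HasDerivAt (fun s : ℝ => f (x + s • w)) ⟪gradient f (x + t • w), w⟫ t := fun t _ =>
    (hf.differentiable one_ne_zero _).hasGradientAt.hasFDerivAt.comp_hasDerivAt t
      (((hasDerivAt_id t).smul_const w).const_add x |>.congr_deriv (one_smul ℝ w))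
  rw [intervalIntegral.integral_eq_sub_of_hasDerivAt hderiv
    (((hf.continuous_gradient.comp (by fun_prop)).inner continuous_const).intervalIntegrable 0 1)]
  simp

theorem hasGradientAt_of_sub_eq_integral_inner {f : E → ℝ} {A : E → E} {y : E}
    (hA : Continuous A)
    (hf : ∀ᶠ h in 𝓝 0, f (y + h) - f y = ∫ t in (0 : ℝ)..1, ⟪A (y + t • h), h⟫) :
    HasGradientAt f (A y) y := by
  rw [hasGradientAt_iff_isLittleO_nhds_zero, Asymptotics.isLittleO_iff]
  intro c hc
  obtain ⟨ρ, hρ, hAρ⟩ := Metric.continuousAt_iff.mp hA.continuousAt c hc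
  filter_upwards [hf, Metric.ball_mem_nhds 0 hρ] with h hfh hh
  have hint : IntervalIntegrable (fun t : ℝ => ⟪A (y + t • h), h⟫) volume 0 1 :=
    ((hA.comp (by fun_prop)).inner continuous_const).intervalIntegrable 0 1
  have hsub : f (y + h) - f y - ⟪A y, h⟫ = ∫ t in (0 : ℝ)..1, ⟪A (y + t • h) - A y, h⟫ := by
    simp_rw [hfh, inner_sub_left]
    rw [intervalIntegral.integral_sub hint intervalIntegrable_const]
    simp
  rw [hsub]
  calc ‖∫ t in (0 : ℝ)..1, ⟪A (y + t • h) - A y, h⟫‖ ≤ c * ‖h‖ * |1 - 0| := by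
        refine intervalIntegral.norm_integral_le_of_norm_le_const fun t ht => ?_
        rw [uIoc_of_le zero_le_one] at ht
        have hdist := dist_add_smul_left_lt (y := y) ht.1.le ht.2 (mem_ball_zero_iff.mp hh)
        calc ‖⟪A (y + t • h) - A y, h⟫‖ ≤ ‖A (y + t • h) - A y‖ * ‖h‖ := norm_inner_le_norm _ _
          _ ≤ c * ‖h‖ := by
            gcongr
            rw [← dist_eq_norm]
            exact (hAρ hdist).le
    _ = c * ‖h‖ := by simp

theorem ContDiff.sub_mul_eq_setIntegral_inner_gradient {f : E → ℝ} (hf : ContDiff ℝ 1 f)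
    (x w : E) (c : ℝ) :
    (f (x + w) - f x) * c = ∫ t in Ioc (0 : ℝ) 1, ⟪gradient f (x + t • w), w⟫ * c := by
  rw [hf.sub_eq_integral_inner_gradient, ← intervalIntegral.integral_mul_const,
    intervalIntegral.integral_of_le zero_le_one]

end Calculus

section Fubini

variable {E : Type*} [NormedAddCommGroup E] [InnerProductSpace ℝ E] [CompleteSpace E]
  [MeasurableSpace E] {μ : Measure (E × E)} {f : E → ℝ} {k : E × E → ℝ} {w : E}

theorem ContDiff.integrable_sub_mul (hf : ContDiff ℝ 1 f)
    (hφ : Integrable (fun q : (E × E) × ℝ => ⟪gradient f (q.1.1 + q.2 • w), w⟫ * k q.1)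
      (μ.prod (volume.restrict (Ioc 0 1)))) :
    Integrable (fun x => (f (x.1 + w) - f x.1) * k x) μ :=
  hφ.integral_prod_left.congr (ae_of_all _ fun x =>
    (hf.sub_mul_eq_setIntegral_inner_gradient x.1 w (k x)).symm)

theorem ContDiff.integral_sub_mul [SFinite μ] (hf : ContDiff ℝ 1 f)
    (hφ : Integrable (fun q : (E × E) × ℝ => ⟪gradient f (q.1.1 + q.2 • w), w⟫ * k q.1)
      (μ.prod (volume.restrict (Ioc 0 1)))) :
    ∫ x, (f (x.1 + w) - f x.1) * k x ∂μ
      = ∫ t in (0 : ℝ)..1, ∫ x, ⟪gradient f (x.1 + t • w), w⟫ * k x ∂μ := by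
  simp_rw [hf.sub_mul_eq_setIntegral_inner_gradient _ w]
  rw [integral_integral_swap hφ, intervalIntegral.integral_of_le zero_le_one]

end Fubini

section ShiftKernel

variable {E : Type*} [NormedAddCommGroup E] [InnerProductSpace ℝ E]

/-- The model is `K y (x₀, x₁) = p₁ x₁ * p_W (y - α x₀ - (1 - α) x₁)`; invariance under
`(y, x₀) ↦ (y + α v, x₀ + v)` is what turns a derivative in `y` into one in `x₀`. -/
structure IsShiftKernel (α : ℝ) (K : E → E × E → ℝ) : Prop where
  continuous : Continuous (Function.uncurry K)
  nonneg : ∀ y x, 0 ≤ K y x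
  shift : ∀ y v x, K (y + α • v) (x + (v, 0)) = K y x

namespace IsShiftKernel

variable {α : ℝ} {K : E → E × E → ℝ} {f : E → ℝ} {y : E}

theorem continuous_apply (hK : IsShiftKernel α K) (y : E) : Continuous (K y) :=
  hK.continuous.comp (Continuous.prodMk_right y)

theorem mul_apply_add_fst (hK : IsShiftKernel α K) (w : E) (x : E × E) :
    f (x + (w, 0)).1 * K (y + α • w) (x + (w, 0))
      = f x.1 * K y x + (f (x.1 + w) - f x.1) * K y x := by
  rw [hK.shift, Prod.fst_add]
  ring

theorem norm_smul_gradient [CompleteSpace E] (hK : IsShiftKernel α K) (y : E) (x : E × E) :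
    ‖K y x • gradient f x.1‖ = ‖gradient f x.1‖ * K y x := by
  rw [norm_smul, norm_of_nonneg (hK.nonneg y x), mul_comm]

end IsShiftKernel

variable [FiniteDimensional ℝ E] [MeasureSpace E] [BorelSpace E]

def GradientLocallyDominated (f : E → ℝ) (K : E → E × E → ℝ) : Prop :=
  ∀ y, ∃ ε > 0, ∃ g : E × E → ℝ, Integrable g ∧
    ∀ y', dist y' y < ε → ∀ x, ‖gradient f x.1‖ * K y' x ≤ g x

namespace IsShiftKernel

variable {α : ℝ} {K : E → E × E → ℝ} {f : E → ℝ} {z : E} {g : E × E → ℝ}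

theorem integrable_smul_gradient (hK : IsShiftKernel α K) (hf : ContDiff ℝ 1 f)
    (hg : Integrable g) (hle : ∀ x, ‖gradient f x.1‖ * K z x ≤ g x) :
    Integrable fun x => K z x • gradient f x.1 :=
  hg.mono' ((hK.continuous_apply z).smul
      (hf.continuous_gradient.comp continuous_fst)).aestronglyMeasurable
    (ae_of_all _ fun x => (hK.norm_smul_gradient z x).trans_le (hle x))

theorem continuous_integral_smul_gradient (hK : IsShiftKernel α K) (hf : ContDiff ℝ 1 f)
    (hdom : GradientLocallyDominated f K) :
    Continuous fun y => ∫ x, K y x • gradient f x.1 := by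
  refine continuous_iff_continuousAt.2 fun y => ?_
  obtain ⟨ε, hε, g, hg, hle⟩ := hdom y
  refine continuousAt_of_dominated (bound := g) (Eventually.of_forall fun z =>
    ((hK.continuous_apply z).smul
      (hf.continuous_gradient.comp continuous_fst)).aestronglyMeasurable)
    ?_ hg (ae_of_all _ fun x => ?_)
  · filter_upwards [Metric.ball_mem_nhds y hε] with z hz
    exact ae_of_all _ fun x => (hK.norm_smul_gradient z x).trans_le (hle z hz x)
  · exact ((hK.continuous.comp (Continuous.prodMk_left x)).smul continuous_const).continuousAt

end IsShiftKernel

variable [(volume : Measure E).IsAddHaarMeasure]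

-- Instance search does not see through `volume = volume.prod volume` on a product.
instance : (volume : Measure (E × E)).IsAddRightInvariant :=
  inferInstanceAs ((volume.prod volume).IsAddRightInvariant)

namespace IsShiftKernel

variable {α : ℝ} {K : E → E × E → ℝ} {f : E → ℝ} {y : E} {ε : ℝ} {g : E × E → ℝ}

theorem integral_inner_gradient_mul (hK : IsShiftKernel α K) (v w : E)
    (hint : Integrable fun x => K (y + α • v) x • gradient f x.1) :
    ∫ x, ⟪gradient f (x.1 + v), w⟫ * K y x = ⟪∫ x, K (y + α • v) x • gradient f x.1, w⟫ := by
  calc ∫ x, ⟪gradient f (x.1 + v), w⟫ * K y x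
      = ∫ x, ⟪gradient f (x + (v, 0)).1, w⟫ * K (y + α • v) (x + (v, 0)) := by
        simp_rw [hK.shift, Prod.fst_add]
    _ = ∫ x, ⟪gradient f x.1, w⟫ * K (y + α • v) x :=
        integral_add_right_eq_self (fun x => ⟪gradient f x.1, w⟫ * K (y + α • v) x) (v, 0)
    _ = ⟪∫ x, K (y + α • v) x • gradient f x.1, w⟫ := by
        rw [real_inner_comm, ← integral_inner hint w]
        congr 1 with x
        rw [real_inner_smul_right, real_inner_comm, mul_comm]

theorem integrable_inner_gradient_add_mul (hK : IsShiftKernel α K) (hf : ContDiff ℝ 1 f)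
    (hg : Integrable g) (v w : E) (hle : ∀ x, ‖gradient f x.1‖ * K (y + α • v) x ≤ g x) :
    (Integrable fun x => ⟪gradient f (x.1 + v), w⟫ * K y x) ∧
      ∫ x, ‖⟪gradient f (x.1 + v), w⟫ * K y x‖ ≤ ‖w‖ * ∫ x, g x := by
  set S : E × E → ℝ := fun x => ⟪gradient f x.1, w⟫ * K (y + α • v) x
  have htranslate : ∀ x, ⟪gradient f (x.1 + v), w⟫ * K y x = S (x + (v, 0)) := fun x => by
    simp only [S, hK.shift, Prod.fst_add]
  have hSle : ∀ x, ‖S x‖ ≤ ‖w‖ * g x := fun x =>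
    calc ‖S x‖ ≤ ‖gradient f x.1‖ * ‖w‖ * K (y + α • v) x := by
          rw [norm_mul, norm_of_nonneg (hK.nonneg _ x)]
          exact mul_le_mul_of_nonneg_right (norm_inner_le_norm _ _) (hK.nonneg _ x)
      _ ≤ ‖w‖ * g x := by
          rw [mul_right_comm, mul_comm]
          exact mul_le_mul_of_nonneg_left (hle x) (norm_nonneg w)
  have hS : Integrable S := (hg.const_mul ‖w‖).mono'
    (((hf.continuous_gradient.comp continuous_fst).inner continuous_const).mul
      (hK.continuous_apply _)).aestronglyMeasurable (ae_of_all _ hSle)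
  simp_rw [htranslate]
  refine ⟨hS.comp_add_right (v, 0), ?_⟩
  calc ∫ x, ‖S (x + (v, 0))‖ = ∫ x, ‖S x‖ := integral_add_right_eq_self (fun x => ‖S x‖) (v, 0)
    _ ≤ ∫ x, ‖w‖ * g x := integral_mono hS.norm (hg.const_mul ‖w‖) hSle
    _ = ‖w‖ * ∫ x, g x := integral_const_mul _ _

theorem integrable_inner_gradient_prod (hK : IsShiftKernel α K) (hf : ContDiff ℝ 1 f)
    (hg : Integrable g) (hdom : ∀ y', dist y' y < ε → ∀ x, ‖gradient f x.1‖ * K y' x ≤ g x)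
    {w : E} (hw : ‖α • w‖ < ε) :
    Integrable (fun q : (E × E) × ℝ => ⟪gradient f (q.1.1 + q.2 • w), w⟫ * K y q.1)
      (volume.prod (volume.restrict (Ioc 0 1))) := by
  have hsection : ∀ t ∈ Ioc (0 : ℝ) 1, _ := fun t ht =>
    hK.integrable_inner_gradient_add_mul hf hg (t • w) w
      (hdom _ (smul_comm α t w ▸ dist_add_smul_left_lt ht.1.le ht.2 hw))
  refine integrable_prod_of_integral_norm_le (C := ‖w‖ * ∫ x, g x)
    (Continuous.aestronglyMeasurable ?_) ?_ ?_
  · exact ((hf.continuous_gradient.comp (by fun_prop)).inner continuous_const).mul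
      ((hK.continuous_apply y).comp continuous_fst)
  · filter_upwards [ae_restrict_mem measurableSet_Ioc] with t ht using (hsection t ht).1
  · filter_upwards [ae_restrict_mem measurableSet_Ioc] with t ht using (hsection t ht).2

theorem integrable_add_smul_iff (hK : IsShiftKernel α K) (hf : ContDiff ℝ 1 f)
    (hg : Integrable g) (hdom : ∀ y', dist y' y < ε → ∀ x, ‖gradient f x.1‖ * K y' x ≤ g x)
    {w : E} (hw : ‖α • w‖ < ε) :
    (Integrable fun x => f x.1 * K (y + α • w) x) ↔ Integrable fun x => f x.1 * K y x := by
  have hΔ := hf.integrable_sub_mul (hK.integrable_inner_gradient_prod hf hg hdom hw)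
  constructor
  · intro h
    refine ((h.comp_add_right (w, 0)).sub hΔ).congr (ae_of_all _ fun x => ?_)
    simp only [Pi.sub_apply, hK.mul_apply_add_fst (f := f), add_sub_cancel_right]
  · intro h
    refine ((h.add hΔ).comp_add_right (-(w, 0))).congr (ae_of_all _ fun x => ?_)
    have := hK.mul_apply_add_fst (f := f) (y := y) w (x + -(w, 0))
    rw [neg_add_cancel_right] at this
    simp only [Pi.add_apply, ← this]

theorem integral_add_smul_sub_integral (hK : IsShiftKernel α K) (hf : ContDiff ℝ 1 f)
    (hg : Integrable g) (hdom : ∀ y', dist y' y < ε → ∀ x, ‖gradient f x.1‖ * K y' x ≤ g x)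
    {w : E} (hw : ‖α • w‖ < ε) (hF : Integrable fun x => f x.1 * K y x) :
    (∫ x, f x.1 * K (y + α • w) x) - ∫ x, f x.1 * K y x
      = ∫ t in (0 : ℝ)..1, ⟪∫ x, K (y + α • (t • w)) x • gradient f x.1, w⟫ := by
  have hφ := hK.integrable_inner_gradient_prod hf hg hdom hw
  have htranslate : ∫ x, f x.1 * K (y + α • w) x
      = (∫ x, f x.1 * K y x) + ∫ x, (f (x.1 + w) - f x.1) * K y x := by
    rw [← integral_add hF (hf.integrable_sub_mul hφ)]
    simp_rw [← hK.mul_apply_add_fst (f := f)]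
    exact (integral_add_right_eq_self (fun x => f x.1 * K (y + α • w) x) (w, 0)).symm
  rw [htranslate, add_sub_cancel_left, hf.integral_sub_mul hφ]
  refine intervalIntegral.integral_congr fun t ht => ?_
  rw [uIcc_of_le zero_le_one] at ht
  exact hK.integral_inner_gradient_mul (t • w) w (hK.integrable_smul_gradient hf hg
    (hdom _ (smul_comm α t w ▸ dist_add_smul_left_lt ht.1 ht.2 hw)))

theorem integrable_of_ae (hK : IsShiftKernel α K) (hα : α ≠ 0) (hf : ContDiff ℝ 1 f)
    (hdom : GradientLocallyDominated f K)
    (hae : ∀ᵐ z, Integrable fun x => f x.1 * K z x) (y : E) :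
    Integrable fun x => f x.1 * K y x := by
  obtain ⟨ε, hε, g, hg, hle⟩ := hdom y
  obtain ⟨z, hz, hFz⟩ := Measure.exists_mem_of_measure_ne_zero_of_ae
    (Metric.measure_ball_pos volume y hε).ne' (ae_restrict_of_ae hae)
  have hw : ‖α • α⁻¹ • (z - y)‖ < ε := by
    rwa [smul_inv_smul₀ hα, ← dist_eq_norm]
  rw [← hK.integrable_add_smul_iff hf hg hle hw, smul_inv_smul₀ hα, add_sub_cancel]
  exact hFz

theorem hasGradientAt_integral (hK : IsShiftKernel α K) (hα : α ≠ 0) (hf : ContDiff ℝ 1 f)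
    (hdom : GradientLocallyDominated f K)
    (hF : Integrable fun x => f x.1 * K y x) :
    HasGradientAt (fun z => ∫ x, f x.1 * K z x) (α⁻¹ • ∫ x, K y x • gradient f x.1) y := by
  obtain ⟨ε, hε, g, hg, hle⟩ := hdom y
  refine hasGradientAt_of_sub_eq_integral_inner
    ((hK.continuous_integral_smul_gradient hf hdom).const_smul α⁻¹) ?_
  filter_upwards [Metric.ball_mem_nhds 0 hε] with h hh
  have hw : ‖α • α⁻¹ • h‖ < ε := by rwa [smul_inv_smul₀ hα, ← mem_ball_zero_iff]
  have key := hK.integral_add_smul_sub_integral hf hg hle hw hF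
  simp only [smul_comm α _ (α⁻¹ • h), smul_inv_smul₀ hα, real_inner_smul_right] at key
  simpa only [Pi.smul_apply, real_inner_smul_left] using key

theorem gradient_log_integral (hK : IsShiftKernel α K) (hα : α ≠ 0) (hf : ContDiff ℝ 1 f)
    (hf_pos : ∀ x, 0 < f x) (hK_pos : ∀ x, 0 < K y x) (hdom : GradientLocallyDominated f K)
    (hF : Integrable fun x => f x.1 * K y x) :
    gradient (fun z => Real.log (∫ x, f x.1 * K z x)) y
      = α⁻¹ • ∫ x, (f x.1 * K y x / ∫ x', f x'.1 * K y x') •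
          gradient (fun x' => Real.log (f x')) x.1 := by
  have hpos : 0 < ∫ x, f x.1 * K y x :=
    integral_pos_of_integrable_nonneg_nonzero (x := 0)
      ((hf.continuous.comp continuous_fst).mul (hK.continuous_apply y)) hF
      (fun x => (mul_pos (hf_pos _) (hK_pos x)).le) (mul_pos (hf_pos _) (hK_pos 0)).ne'
  have hintegrand : ∀ x : E × E,
      (f x.1 * K y x / ∫ x', f x'.1 * K y x') • gradient (fun x' => Real.log (f x')) x.1
        = (∫ x', f x'.1 * K y x')⁻¹ • K y x • gradient f x.1 := fun x => by
    rw [((hf.differentiable one_ne_zero x.1).hasGradientAt.log (hf_pos x.1).ne').gradient,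
      smul_smul, smul_smul]
    congr 1
    field_simp [(hf_pos x.1).ne']
  simp_rw [hintegrand, integral_smul,
    ((hK.hasGradientAt_integral hα hf hdom hF).log hpos.ne').gradient]
  exact smul_comm _ _ _

end IsShiftKernel
end ShiftKernel

section Bridge

variable {E : Type*} [NormedAddCommGroup E] [InnerProductSpace ℝ E] {p₀ p₁ pW : E → ℝ}

theorem isShiftKernel_bridge (α : ℝ) (hp₁ : Continuous p₁) (hpW : Continuous pW)
    (hp₁_nonneg : ∀ x, 0 ≤ p₁ x) (hpW_nonneg : ∀ w, 0 ≤ pW w) :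
    IsShiftKernel α fun y x => p₁ x.2 * pW (y - α • x.1 - (1 - α) • x.2) where
  continuous := (hp₁.comp (by fun_prop)).mul (hpW.comp (by fun_prop))
  nonneg _ _ := mul_nonneg (hp₁_nonneg _) (hpW_nonneg _)
  shift y v x := by
    simp only [Prod.fst_add, Prod.snd_add, add_zero, smul_add]
    congr 2
    abel

variable [FiniteDimensional ℝ E] [MeasureSpace E] [BorelSpace E]
  [(volume : Measure E).IsAddHaarMeasure]

theorem integrable_bridge_joint (α : ℝ) (hp₀ : Integrable p₀) (hp₁ : Integrable p₁)
    (hpW : Integrable pW) (hp₀c : Continuous p₀) (hp₁c : Continuous p₁) (hpWc : Continuous pW) :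
    Integrable fun q : E × (E × E) =>
      p₀ q.2.1 * (p₁ q.2.2 * pW (q.1 - α • q.2.1 - (1 - α) • q.2.2)) := by
  refine (integrable_prod_iff' (Continuous.aestronglyMeasurable (by fun_prop))).2
    ⟨ae_of_all _ fun x => ?_, ?_⟩
  · simp_rw [sub_sub]
    exact ((hpW.comp_sub_right _).const_mul _).const_mul _
  · simp_rw [norm_mul, sub_sub, integral_const_mul, integral_sub_right_eq_self (fun y => ‖pW y‖),
      ← mul_assoc]
    exact (hp₀.norm.mul_prod hp₁.norm).mul_const _

end Bridge

open MeasureTheory Real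

theorem bridge_target_score_identity_first_general
    (d : ℕ) (α : ℝ) (hα₀ : 0 < α)
    (p₀ p₁ pW : EuclideanSpace ℝ (Fin d) → ℝ)
    (hp₀_pos : ∀ x, 0 < p₀ x) (hp₁_pos : ∀ x, 0 < p₁ x) (hpW_pos : ∀ w, 0 < pW w)
    (hp₀_diff : ContDiff ℝ 1 p₀) (hp₁_diff : ContDiff ℝ 1 p₁) (hpW_diff : ContDiff ℝ 1 pW)
    (hp₀_prob : ∫ x, p₀ x = 1) (hp₁_prob : ∫ x, p₁ x = 1) (hpW_prob : ∫ w, pW w = 1)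
    (pY : EuclideanSpace ℝ (Fin d) → ℝ)
    (hpY : ∀ y, pY y = ∫ p : EuclideanSpace ℝ (Fin d) × EuclideanSpace ℝ (Fin d),
      p₀ p.1 * p₁ p.2 * pW (y - α • p.1 - (1 - α) • p.2))
    (post : EuclideanSpace ℝ (Fin d) → EuclideanSpace ℝ (Fin d) → EuclideanSpace ℝ (Fin d) → ℝ)
    (hpost : ∀ x₀ x₁ y, post x₀ x₁ y
      = p₀ x₀ * p₁ x₁ * pW (y - α • x₀ - (1 - α) • x₁) / pY y)
    -- integrability conditions permitting differentiation under the integral sign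
    (hDom : ∀ y, ∃ ε > 0,
      ∃ g : EuclideanSpace ℝ (Fin d) × EuclideanSpace ℝ (Fin d) → ℝ, Integrable g ∧
      ∀ y', dist y' y < ε → ∀ p : EuclideanSpace ℝ (Fin d) × EuclideanSpace ℝ (Fin d),
        ‖gradient p₀ p.1‖ * p₁ p.2 * pW (y' - α • p.1 - (1 - α) • p.2) ≤ g p) :
    ∀ y, gradient (fun y' => Real.log (pY y')) y
      = α⁻¹ • ∫ p : EuclideanSpace ℝ (Fin d) × EuclideanSpace ℝ (Fin d),
          post p.1 p.2 y • gradient (fun x' => Real.log (p₀ x')) p.1 := by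
  intro y
  set K : EuclideanSpace ℝ (Fin d) → _ := fun z (x : EuclideanSpace ℝ (Fin d) × _) =>
    p₁ x.2 * pW (z - α • x.1 - (1 - α) • x.2)
  have hK : IsShiftKernel α K := isShiftKernel_bridge α hp₁_diff.continuous hpW_diff.continuous
    (fun x => (hp₁_pos x).le) fun w => (hpW_pos w).le
  have hdom : GradientLocallyDominated p₀ K := by
    simpa only [GradientLocallyDominated, K, mul_assoc] using hDom
  have hjoint := integrable_bridge_joint α
    (Integrable.of_integral_ne_zero (hp₀_prob ▸ one_ne_zero))
    (Integrable.of_integral_ne_zero (hp₁_prob ▸ one_ne_zero))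
    (Integrable.of_integral_ne_zero (hpW_prob ▸ one_ne_zero))
    hp₀_diff.continuous hp₁_diff.continuous hpW_diff.continuous
  obtain rfl : pY = fun z => ∫ x, p₀ x.1 * K z x := funext fun z => by
    simp only [hpY, K, mul_assoc]
  simp only [hpost, mul_assoc]
  exact hK.gradient_log_integral hα₀.ne' hp₀_diff hp₀_pos
    (fun x => mul_pos (hp₁_pos _) (hpW_pos _)) hdom
    (hK.integrable_of_ae hα₀.ne' hp₀_diff hdom hjoint.prod_right_ae y)

/-- **Bridge Target Score Identity (first form)**: for `Y = αX₀ + (1-α)X₁ + W`,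
`∇ log p_Y(y) = α⁻¹ ∬ ∇ log p₀(x₀) p_{X₀,X₁|Y}(x₀,x₁|y) dx₀ dx₁`. -/
theorem bridge_target_score_identity_first
    (d : ℕ) (hd : 1 ≤ d) (α : ℝ) (hα₀ : 0 < α) (hα₁ : α < 1)
    (p₀ p₁ pW : EuclideanSpace ℝ (Fin d) → ℝ)
    (hp₀_pos : ∀ x, 0 < p₀ x) (hp₁_pos : ∀ x, 0 < p₁ x) (hpW_pos : ∀ w, 0 < pW w)
    (hp₀_diff : ContDiff ℝ 1 p₀) (hp₁_diff : ContDiff ℝ 1 p₁) (hpW_diff : ContDiff ℝ 1 pW)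
    (hp₀_prob : ∫ x, p₀ x = 1) (hp₁_prob : ∫ x, p₁ x = 1) (hpW_prob : ∫ w, pW w = 1)
    (pY : EuclideanSpace ℝ (Fin d) → ℝ)
    (hpY : ∀ y, pY y = ∫ p : EuclideanSpace ℝ (Fin d) × EuclideanSpace ℝ (Fin d),
      p₀ p.1 * p₁ p.2 * pW (y - α • p.1 - (1 - α) • p.2))
    (post : EuclideanSpace ℝ (Fin d) → EuclideanSpace ℝ (Fin d) → EuclideanSpace ℝ (Fin d) → ℝ)
    (hpost : ∀ x₀ x₁ y, post x₀ x₁ y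
      = p₀ x₀ * p₁ x₁ * pW (y - α • x₀ - (1 - α) • x₁) / pY y)
    -- integrability conditions permitting differentiation under the integral sign
    (hInt : ∀ y, Integrable (fun p : EuclideanSpace ℝ (Fin d) × EuclideanSpace ℝ (Fin d) =>
      ‖gradient p₀ p.1‖ * p₁ p.2 * pW (y - α • p.1 - (1 - α) • p.2)))
    (hDom : ∀ y, ∃ ε > 0,
      ∃ g : EuclideanSpace ℝ (Fin d) × EuclideanSpace ℝ (Fin d) → ℝ, Integrable g ∧
      ∀ y', dist y' y < ε → ∀ p : EuclideanSpace ℝ (Fin d) × EuclideanSpace ℝ (Fin d),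
        ‖gradient p₀ p.1‖ * p₁ p.2 * pW (y' - α • p.1 - (1 - α) • p.2) ≤ g p) :
    ∀ y, gradient (fun y' => Real.log (pY y')) y
      = α⁻¹ • ∫ p : EuclideanSpace ℝ (Fin d) × EuclideanSpace ℝ (Fin d),
          post p.1 p.2 y • gradient (fun x' => Real.log (p₀ x')) p.1 :=
  bridge_target_score_identity_first_general d α hα₀ p₀ p₁ pW hp₀_pos hp₁_pos hpW_pos hp₀_diff
    hp₁_diff hpW_diff hp₀_prob hp₁_prob hpW_prob pY hpY post hpost hDom
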